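/- If κ is a Ramsey cardinal, then Pr(κ) holds: every algebra M = (M, F) with |M| = κ and |F| < κ has a free subset of cardinality κ. -/

import Mathlib

open Cardinal

universe u

/-- An algebra: a carrier `M` with a set of finitary operations (for each arity `n`,
a set of `n`-ary functions). -/
structure FAlg (M : Type u) where
  ops : ∀ n : ℕ, Set ((Fin n → M) → M)

/-- `S` is a subalgebra: closed under all operations. -/
def FAlg.IsSubalg {M : Type u} (A : FAlg M) (S : Set M) : Prop :=
  ∀ ⦃n : ℕ⦄, ∀ f ∈ A.ops n, ∀ x : Fin n → M, (∀ i, x i ∈ S) → f x ∈ S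

/-- The least subalgebra containing `B`. -/
def FAlg.Cl {M : Type u} (A : FAlg M) (B : Set M) : Set M :=
  ⋂₀ {S : Set M | A.IsSubalg S ∧ B ⊆ S}

/-- `B` is free for the algebra `A`. -/
def FAlg.IsFree {M : Type u} (A : FAlg M) (B : Set M) : Prop :=
  ∀ a ∈ B, a ∉ A.Cl (B \ {a})

/-- The number of operations of the algebra. -/
def FAlg.opsCard {M : Type u} (A : FAlg M) : Cardinal.{u} :=
  #(Σ n : ℕ, ↥(A.ops n))

/-- `Pr κ`: every algebra on a set of size `κ` with fewer than `κ` operations has a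
free subset of cardinality `κ`. -/
def Pr (κ : Cardinal.{u}) : Prop :=
  ∀ (M : Type u) (A : FAlg M), #M = κ → A.opsCard < κ →
    ∃ B : Set M, A.IsFree B ∧ #B = κ

/-- `κ` is Ramsey: `κ → (κ)^{<ω}_2`, i.e. every 2-colouring of the finite subsets of a
set of size `κ` has a homogeneous set of size `κ` (homogeneous for each size of subset). -/
def IsRamsey (κ : Cardinal.{u}) : Prop :=
  ∀ c : Finset κ.ord.ToType → Bool,
    ∃ H : Set κ.ord.ToType, #H = κ ∧
      ∀ s t : Finset κ.ord.ToType, ↑s ⊆ H → ↑t ⊆ H →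
        s.card = t.card → c s = c t

/-!
Enumerate `M` by `κ.ord.ToType` and colour a finite set `s` by recording, for each position `j`,
a term (chosen once and for all) expressing the `j`-th element of `s` from the other elements of
`s`, if there is one. Terms in a language with fewer than `κ` symbols are fewer than `κ`, so there
are fewer than `κ` colours, and the two-colour Ramsey property already gives homogeneous sets for
such colourings: colour a union of two separated blocks by whether its two halves get the same
colour. On a homogeneous `H` of size `κ`, a term generating some `a ∈ H` from the rest of `H` would
express two different elements `x ≠ y` of `H` sitting in the same position over the same other
elements, so `x = y`. Finally, a Ramsey `κ > 1` is uncountable, and for `κ ≤ 1` there are no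
operations at all.
-/

open Set Ordinal FirstOrder FirstOrder.Language

namespace FAlg

variable {M : Type u} (A : FAlg M)

def language : Language :=
  ⟨fun n => A.ops n, fun _ => Empty⟩

instance : A.language.Structure M where
  funMap f x := f.1 x
  RelMap r _ := Empty.elim r

theorem cl_subset {B S : Set M} (hS : A.IsSubalg S) (hB : B ⊆ S) : A.Cl B ⊆ S :=
  sInter_subset_of_mem ⟨hS, hB⟩

theorem exists_term_of_mem_cl {B : Set M} {a : M} (ha : a ∈ A.Cl B) :
    ∃ t : A.language.Term B, t.realize (↑) = a := by
  refine Substructure.mem_closure_iff_exists_term.1 (A.cl_subset ?_ Substructure.subset_closure ha)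
  exact fun _ f hf x hx => (Substructure.closure A.language B).fun_mem ⟨f, hf⟩ x hx

theorem isFree_of_isEmpty_ops (h : IsEmpty (Σ n, A.ops n)) (B : Set M) : A.IsFree B :=
  fun a _ ha => (A.cl_subset (S := B \ {a}) (fun n f hf => h.elim ⟨n, f, hf⟩) subset_rfl ha).2 rfl

theorem mk_term_lt {κ : Cardinal.{u}} (hκ : ℵ₀ < κ) (hA : A.opsCard < κ) :
    #(A.language.Term ℕ) < κ := by
  refine Term.card_le.trans_lt (max_lt hκ ?_)
  rw [mk_sum, mk_nat, lift_aleph0, Cardinal.lift_uzero]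
  exact add_lt_of_lt hκ.le hκ hA

end FAlg

theorem pr_of_le_one {κ : Cardinal.{u}} (h : κ ≤ 1) : Pr κ := fun _ A hM hA =>
  ⟨Set.univ, A.isFree_of_isEmpty_ops (mk_eq_zero_iff.1 (Cardinal.lt_one_iff.1 (hA.trans_le h))) _,
    by rw [mk_univ, hM]⟩

theorem not_isRamsey_of_lt_aleph0 {κ : Cardinal.{u}} (h1 : 1 < κ) (hκ : κ < ℵ₀) :
    ¬IsRamsey κ := by
  intro hR
  have : Nontrivial κ.ord.ToType := one_lt_iff_nontrivial.1 (by rwa [mk_ord_toType])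
  have : Finite κ.ord.ToType := lt_aleph0_iff_finite.1 (by rwa [mk_ord_toType])
  obtain ⟨m, b, hmb⟩ := exists_pair_ne κ.ord.ToType
  obtain ⟨H, hH, hhom⟩ := hR fun s => decide (m ∈ s)
  have hH : H = Set.univ := eq_of_subset_of_ncard_le (subset_univ H)
    (by rw [ncard_univ, ← Nat.card_coe_set_eq, Nat.card, Nat.card, hH, mk_ord_toType])
  exact hmb <| by simpa using hhom {m} {b} (by simp [hH]) (by simp [hH]) rfl

theorem not_isRamsey_aleph0 : ¬IsRamsey (ℵ₀ : Cardinal.{u}) := by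
  intro hR
  let rank : (ℵ₀ : Cardinal.{u}).ord.ToType → ℕ := fun x => (Iio x).ncard
  have hrank : rank.Injective := by
    refine StrictMono.injective fun x y hxy => Set.ncard_lt_ncard (Iio_ssubset_Iio hxy) ?_
    exact lt_aleph0_iff_set_finite.1 ((mk_Iio_lt y (by simp)).trans_eq (mk_ord_toType _))
  obtain ⟨H, hH, hhom⟩ := hR fun s => decide (∀ x ∈ s, s.card ≤ rank x)
  have hHinf : H.Infinite := infinite_coe_iff.1 (infinite_iff.2 hH.ge)
  obtain ⟨m, hm⟩ := hHinf.nonempty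
  obtain ⟨w, hw, hwcard⟩ := (hHinf.sdiff (finite_singleton m)).exists_subset_card_eq (rank m)
  have hmw : m ∉ w := fun h => (hw h).2 rfl
  obtain ⟨w', hw', hw'card⟩ := (hHinf.sdiff ((finite_Iic (rank m)).preimage
    hrank.injOn)).exists_subset_card_eq (rank m + 1)
  have := hhom (insert m w) w'
    (by rw [Finset.coe_insert]; exact insert_subset hm fun x hx => (hw hx).1)
    (fun x hx => (hw' hx).1) (by rw [Finset.card_insert_of_notMem hmw, hwcard, hw'card])
  have hfalse : ¬∀ x ∈ insert m w, (insert m w).card ≤ rank x := fun h => by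
    have := h m (Finset.mem_insert_self m w)
    rw [Finset.card_insert_of_notMem hmw, hwcard] at this
    omega
  have htrue : ∀ x ∈ w', w'.card ≤ rank x := fun x hx => by
    have := (hw' hx).2
    simp only [mem_preimage, mem_Iic, not_le] at this
    omega
  exact hfalse ((decide_eq_decide.1 this).2 htrue)

theorem IsRamsey.aleph0_lt {κ : Cardinal.{u}} (hR : IsRamsey κ) (h1 : 1 < κ) : ℵ₀ < κ := by
  rcases lt_trichotomy κ ℵ₀ with hlt | rfl | hgt
  · exact absurd hR (not_isRamsey_of_lt_aleph0 h1 hlt)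
  · exact absurd hR not_isRamsey_aleph0
  · exact hgt

def IsHomogeneous {α C : Type*} (c : Finset α → C) (H : Set α) : Prop :=
  ∀ s t : Finset α, ↑s ⊆ H → ↑t ⊆ H → s.card = t.card → c s = c t

section LinearOrder

variable {α : Type*} [LinearOrder α]

theorem Finset.sort_union_of_forall_lt {u v : Finset α} (h : ∀ a ∈ u, ∀ b ∈ v, a < b) :
    (u ∪ v).sort = u.sort ++ v.sort := by
  refine (Finset.sortedLT_sort _).eq_of_mem_iff ?_ (by simp)
  rw [List.sortedLT_iff_pairwise, List.pairwise_append]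
  exact ⟨List.sortedLT_iff_pairwise.1 (Finset.sortedLT_sort u),
    List.sortedLT_iff_pairwise.1 (Finset.sortedLT_sort v), by simpa using h⟩

open Classical in
noncomputable def halvesAgree {C : Type*} (c : Finset α → C) (s : Finset α) : Bool :=
  decide (c (s.sort.take (s.card / 2)).toFinset = c (s.sort.drop (s.card / 2)).toFinset)

theorem halvesAgree_union {C : Type*} (c : Finset α → C) {u v : Finset α}
    (h : ∀ a ∈ u, ∀ b ∈ v, a < b) (hcard : u.card = v.card) :
    halvesAgree c (u ∪ v) = true ↔ c u = c v := by
  have hdisj : Disjoint u v := Finset.disjoint_left.2 fun a hu hv => (h a hu a hv).false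
  have hhalf : (u ∪ v).card / 2 = u.sort.length := by
    rw [Finset.card_union_of_disjoint hdisj, Finset.length_sort]
    omega
  rw [halvesAgree, hhalf, Finset.sort_union_of_forall_lt h, List.take_left, List.drop_left,
    Finset.sort_toFinset, Finset.sort_toFinset]
  simp only [decide_eq_true_eq]

end LinearOrder

section Homogeneous

variable {κ : Cardinal.{u}}

theorem exists_finset_above (hκ : ℵ₀ ≤ κ) {H : Set κ.ord.ToType} (hH : #H = κ)
    (s : Finset κ.ord.ToType) (n : ℕ) :
    ∃ w : Finset κ.ord.ToType, ↑w ⊆ H ∧ w.card = n ∧ ∀ a ∈ s, ∀ b ∈ w, a < b := by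
  have : Nonempty κ.ord.ToType :=
    mk_ne_zero_iff.1 (by rw [mk_ord_toType]; exact (aleph0_pos.trans_le hκ).ne')
  obtain ⟨x, hx⟩ := s.bddAbove
  have hinf : (H \ Iic x).Infinite := fun hfin => by
    have hIic : #(Iic x) < κ := (mk_Iic_lt x (by rw [mk_ord_toType, type_toType])
      (by rwa [mk_ord_toType])).trans_eq (mk_ord_toType κ)
    refine (?_ : #H < κ).ne hH
    calc #H ≤ #(H \ Iic x ∪ Iic x : Set _) := mk_le_mk_of_subset (subset_sdiff_union _ _)
      _ ≤ #↥(H \ Iic x) + #(Iic x) := mk_union_le _ _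
      _ < κ := add_lt_of_lt hκ (hfin.lt_aleph0.trans_le hκ) hIic
  obtain ⟨w, hw, rfl⟩ := hinf.exists_subset_card_eq n
  exact ⟨w, fun b hb => (hw hb).1, rfl, fun a ha b hb => (hx ha).trans_lt (not_le.1 (hw hb).2)⟩

theorem exists_separated_blocks (hκ : ℵ₀ ≤ κ) {H : Set κ.ord.ToType} (hH : #H = κ) (n : ℕ) :
    ∃ β : κ.ord.ToType → Fin n → κ.ord.ToType, (∀ x i, β x i ∈ H) ∧ (∀ x, (β x).Injective) ∧
      ∀ x y, x < y → ∀ i j, β x i < β y j := by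
  -- `κ.ord`-many consecutive blocks of length `n` have order type `n * κ.ord = κ.ord`.
  have hle : type (Prod.Lex (α := κ.ord.ToType) (β := ULift.{u} (Fin n)) (· < ·) (· < ·)) ≤
      typeLT H := by
    rw [type_prod_lex, type_toType]
    refine le_trans ?_ (ord_le.2 (by rw [card_type, hH]))
    refine (mul_le_iff_of_isSuccLimit (isSuccLimit_ord hκ)).2 fun b hb => ?_
    rw [type_fintype, Fintype.card_ulift, Fintype.card_fin]
    exact (isPrincipal_mul_ord hκ (lt_ord.2 (by simpa using natCast_lt_aleph0.trans_le hκ))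
      hb).le
  obtain ⟨e⟩ := type_le_iff'.1 hle
  refine ⟨fun x i => e (x, ULift.up i), fun x i => (e _).2, fun x i j hij => ?_,
    fun x y hxy i j => e.map_rel_iff.2 (Prod.Lex.left _ _ hxy)⟩
  simpa using e.injective (Subtype.ext hij)

variable {C : Type u}

theorem eq_of_separated_of_isHomogeneous_halvesAgree (hκ : ℵ₀ ≤ κ) (hC : #C < κ)
    (c : Finset κ.ord.ToType → C) {H : Set κ.ord.ToType} (hH : #H = κ)
    (hhom : IsHomogeneous (halvesAgree c) H) {u v : Finset κ.ord.ToType} (hu : ↑u ⊆ H)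
    (hv : ↑v ⊆ H) (hcard : u.card = v.card) (huv : ∀ a ∈ u, ∀ b ∈ v, a < b) : c u = c v := by
  by_contra hne
  obtain ⟨β, hβH, hβinj, hβlt⟩ := exists_separated_blocks hκ hH u.card
  let block x : Finset κ.ord.ToType := Finset.univ.image (β x)
  have hblock_lt : ∀ x y, x < y → ∀ a ∈ block x, ∀ b ∈ block y, a < b := by
    simp only [block, Finset.mem_image, Finset.mem_univ, true_and]
    rintro x y hxy _ ⟨i, rfl⟩ _ ⟨j, rfl⟩
    exact hβlt x y hxy i j
  have hblock_card : ∀ x, (block x).card = u.card := fun x => by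
    simp [block, Finset.card_image_of_injective _ (hβinj x)]
  have hblock_H : ∀ x, ↑(block x) ⊆ H := fun x => by
    simpa [block, Set.range_subset_iff] using hβH x
  have hdisj {s t : Finset κ.ord.ToType} (h : ∀ a ∈ s, ∀ b ∈ t, a < b) : Disjoint s t :=
    Finset.disjoint_left.2 fun a hs ht => (h a hs a ht).false
  -- Homogeneity transfers the disagreement of `c u` and `c v` to any two separated blocks.
  have hblock_ne : ∀ x y, x < y → c (block x) ≠ c (block y) := fun x y hxy heq => by
    rw [← halvesAgree_union c (hblock_lt x y hxy) (by rw [hblock_card, hblock_card]),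
      hhom _ (u ∪ v) ?_ ?_ ?_, halvesAgree_union c huv hcard] at heq
    · exact hne heq
    · simpa using ⟨hblock_H x, hblock_H y⟩
    · simpa using ⟨hu, hv⟩
    · rw [Finset.card_union_of_disjoint (hdisj (hblock_lt x y hxy)),
        Finset.card_union_of_disjoint (hdisj huv), hblock_card, hblock_card, hcard]
  have hinj : (fun x => c (block x)).Injective := Function.Injective.of_lt_imp_ne hblock_ne
  exact hC.not_ge ((mk_ord_toType κ).symm.trans_le (mk_le_of_injective hinj))

theorem IsRamsey.exists_isHomogeneous (hR : IsRamsey κ) (hκ : ℵ₀ ≤ κ) (hC : #C < κ)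
    (c : Finset κ.ord.ToType → C) : ∃ H : Set κ.ord.ToType, #H = κ ∧ IsHomogeneous c H := by
  obtain ⟨H, hH, hhom⟩ := hR (halvesAgree c)
  refine ⟨H, hH, fun s t hs ht hst => ?_⟩
  obtain ⟨w, hwH, hw, hsw⟩ := exists_finset_above hκ hH (s ∪ t) s.card
  have key (u : Finset κ.ord.ToType) (hu : ↑u ⊆ H) (hcard : u.card = w.card)
      (huw : ∀ a ∈ u, ∀ b ∈ w, a < b) : c u = c w :=
    eq_of_separated_of_isHomogeneous_halvesAgree hκ hC c hH hhom hu hwH hcard huw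
  rw [key s hs hw.symm fun a ha => hsw a (Finset.mem_union_left t ha),
    key t ht (by rw [hw, hst]) fun a ha => hsw a (Finset.mem_union_right s ha)]

end Homogeneous

section Position

variable {α : Type*} [LinearOrder α]

def Finset.position (s : Finset α) (a : α) : ℕ :=
  (s.filter (· < a)).card

theorem Finset.position_lt_card {s : Finset α} {a : α} (ha : a ∈ s) : s.position a < s.card :=
  Finset.card_lt_card (Finset.filter_ssubset.2 ⟨a, ha, lt_irrefl a⟩)

theorem Finset.position_lt_position {s : Finset α} {a b : α} (ha : a ∈ s) (hab : a < b) :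
    s.position a < s.position b := by
  refine Finset.card_lt_card ((Finset.ssubset_iff_of_subset ?_).2 ⟨a, ?_, ?_⟩)
  · intro x hx
    simp only [Finset.mem_filter] at hx ⊢
    exact ⟨hx.1, hx.2.trans hab⟩
  · exact Finset.mem_filter.2 ⟨ha, hab⟩
  · exact fun h => (Finset.mem_filter.1 h).2.false

theorem Finset.position_injOn (s : Finset α) : Set.InjOn s.position s := by
  intro a ha b hb hab
  rcases lt_trichotomy a b with h | h | h
  · exact absurd hab (position_lt_position ha h).ne
  · exact h
  · exact absurd hab (position_lt_position hb h).ne'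

theorem Finset.position_insert_union {u₁ u₂ : Finset α} {x : α} (h₁ : ∀ b ∈ u₁, b < x)
    (h₂ : ∀ b ∈ u₂, x < b) : (insert x (u₁ ∪ u₂)).position x = u₁.card := by
  refine congrArg Finset.card (Finset.ext fun b => ?_)
  simp only [Finset.mem_filter, Finset.mem_insert, Finset.mem_union]
  constructor
  · rintro ⟨rfl | hb | hb, hbx⟩
    · exact absurd hbx (lt_irrefl b)
    · exact hb
    · exact absurd hbx (h₂ b hb).asymm
  · exact fun hb => ⟨Or.inr (Or.inl hb), h₁ b hb⟩

variable {M : Type*} (g : α → M) (d₀ : α)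

def sortedAssignment (u : Finset α) (i : ℕ) : M :=
  g (u.sort.getD i d₀)

variable {g d₀}

theorem sortedAssignment_idxOf {u : Finset α} {x : α} (hx : x ∈ u) :
    sortedAssignment g d₀ u (u.sort.idxOf x) = g x := by
  simp [sortedAssignment, List.getD_eq_getElem?_getD,
    List.getElem?_idxOf ((Finset.mem_sort _).2 hx)]

end Position

namespace FAlg

section Witness

variable {M : Type u} (A : FAlg M) {α : Type*} [LinearOrder α] (g : α → M) (d₀ : α)

def IsWitness (s : Finset α) (j : ℕ) (t : A.language.Term ℕ) : Prop :=
  ∃ a ∈ s, s.position a = j ∧ t.realize (sortedAssignment g d₀ (s.erase a)) = g a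

open Classical in
noncomputable def witness (s : Finset α) (j : ℕ) : Option (A.language.Term ℕ) :=
  if h : ∃ t, A.IsWitness g d₀ s j t then some h.choose else none

noncomputable def witnessColour (s : Finset α) : List (Option (A.language.Term ℕ)) :=
  List.ofFn fun j : Fin s.card => A.witness g d₀ s j

variable {A g d₀}

theorem isWitness_insert_iff {u : Finset α} {x : α} (hx : x ∉ u) {t : A.language.Term ℕ} :
    A.IsWitness g d₀ (insert x u) ((insert x u).position x) t ↔
      t.realize (sortedAssignment g d₀ u) = g x := by
  constructor
  · rintro ⟨a, ha, hpos, hreal⟩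
    obtain rfl := Finset.position_injOn _ ha (Finset.mem_insert_self x u) hpos
    rwa [Finset.erase_insert hx] at hreal
  · intro h
    exact ⟨x, Finset.mem_insert_self x u, rfl, by rwa [Finset.erase_insert hx]⟩

theorem isWitness_of_witness_eq_some {s : Finset α} {j : ℕ} {t : A.language.Term ℕ}
    (h : A.witness g d₀ s j = some t) : A.IsWitness g d₀ s j t := by
  unfold witness at h
  split_ifs at h with hex
  exact Option.some.inj h ▸ hex.choose_spec

theorem exists_witness_eq_some {s : Finset α} {j : ℕ} {t : A.language.Term ℕ}
    (h : A.IsWitness g d₀ s j t) : ∃ t', A.witness g d₀ s j = some t' :=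
  ⟨_, dif_pos ⟨t, h⟩⟩

theorem witness_eq_of_witnessColour_eq {s s' : Finset α}
    (h : A.witnessColour g d₀ s = A.witnessColour g d₀ s') {j : ℕ} (hj : j < s.card) :
    A.witness g d₀ s j = A.witness g d₀ s' j := by
  have hcard : s.card = s'.card := by simpa [witnessColour] using congrArg List.length h
  have := congrArg (·[j]?) h
  simp only [witnessColour, List.getElem?_ofFn] at this
  rwa [dif_pos hj, dif_pos (hcard ▸ hj), Option.some_inj] at this

end Witness

theorem exists_realize_eq_of_mem_cl {M : Type u} (A : FAlg M) {α : Type*} [LinearOrder α]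
    (g : α ≃ M) (d₀ : α) {H : Set α} {a : α} (ha : g a ∈ A.Cl (g '' H \ {g a})) :
    ∃ u : Finset α, ↑u ⊆ H ∧ a ∉ u ∧
      ∃ t : A.language.Term ℕ, t.realize (sortedAssignment g d₀ u) = g a := by
  classical
  obtain ⟨t, ht⟩ := A.exists_term_of_mem_cl ha
  let u := t.varFinset.image fun b => g.symm b.1
  refine ⟨u, ?_, ?_, t.restrictVar fun b => u.sort.idxOf (g.symm b), ?_⟩
  · simp only [u, Finset.coe_image, Set.image_subset_iff]
    rintro ⟨_, ⟨c, hc, rfl⟩, -⟩ -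
    simpa using hc
  · intro hau
    obtain ⟨⟨b, _, hb⟩, _, hba⟩ := Finset.mem_image.1 hau
    exact hb (by rw [← hba, Equiv.apply_symm_apply]; rfl)
  · refine (Term.realize_restrictVar _ fun b => ?_).trans ht
    rw [sortedAssignment_idxOf (Finset.mem_image_of_mem _ b.2), Equiv.apply_symm_apply]

end FAlg

section Freeness

variable {κ : Cardinal.{u}}

theorem exists_finset_pair_position_eq (hκ : ℵ₀ ≤ κ) {H : Set κ.ord.ToType} (hH : #H = κ)
    {n j : ℕ} (hj : j ≤ n) :
    ∃ u : Finset κ.ord.ToType, ∃ x y, x ≠ y ∧ ↑u ⊆ H ∧ u.card = n ∧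
      ∀ z ∈ ({x, y} : Finset κ.ord.ToType), z ∈ H ∧ z ∉ u ∧ (insert z u).position z = j := by
  obtain ⟨u₁, hu₁H, hu₁, -⟩ := exists_finset_above hκ hH ∅ j
  obtain ⟨w, hwH, hw, hu₁w⟩ := exists_finset_above hκ hH u₁ 2
  obtain ⟨x, y, hxy, rfl⟩ := Finset.card_eq_two.1 hw
  obtain ⟨u₂, hu₂H, hu₂, hwu₂⟩ := exists_finset_above hκ hH {x, y} (n - j)
  have hdisj : Disjoint u₁ u₂ := Finset.disjoint_left.2 fun a h₁ h₂ =>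
    ((hu₁w a h₁ x (by simp)).trans (hwu₂ x (by simp) a h₂)).false
  refine ⟨u₁ ∪ u₂, x, y, hxy, by simpa using ⟨hu₁H, hu₂H⟩, ?_, fun z hz => ⟨hwH hz, ?_, ?_⟩⟩
  · rw [Finset.card_union_of_disjoint hdisj, hu₁, hu₂]
    omega
  · simp only [Finset.mem_union, not_or]
    exact ⟨fun h => (hu₁w z h z hz).false, fun h => (hwu₂ z hz z h).false⟩
  · rw [Finset.position_insert_union (fun b hb => hu₁w b hb z hz) (hwu₂ z hz), hu₁]

theorem FAlg.isFree_image_of_isHomogeneous {M : Type u} (A : FAlg M) (hκ : ℵ₀ ≤ κ)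
    (g : κ.ord.ToType ≃ M) (d₀ : κ.ord.ToType) {H : Set κ.ord.ToType} (hH : #H = κ)
    (hhom : IsHomogeneous (A.witnessColour g d₀) H) : A.IsFree (g '' H) := by
  rintro _ ⟨a, haH, rfl⟩ hcl
  obtain ⟨u, huH, hau, t, ht⟩ := A.exists_realize_eq_of_mem_cl g d₀ hcl
  set j := (insert a u).position a
  have hcard : (insert a u).card = u.card + 1 := Finset.card_insert_of_notMem hau
  have hj : j < (insert a u).card := Finset.position_lt_card (Finset.mem_insert_self a u)
  obtain ⟨t₀, ht₀⟩ := exists_witness_eq_some ((isWitness_insert_iff hau).2 ht)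
  obtain ⟨v, x, y, hxy, hvH, hv, hpos⟩ := exists_finset_pair_position_eq hκ hH (n := u.card)
    (j := j) (by omega)
  -- By homogeneity, the witness `t₀` chosen for `a` in `insert a u` also witnesses `x` and `y`.
  have key : ∀ z ∈ ({x, y} : Finset _), t₀.realize (sortedAssignment g d₀ v) = g z := by
    intro z hz
    obtain ⟨hzH, hzv, hzj⟩ := hpos z hz
    have hzcard : (insert z v).card = u.card + 1 := by rw [Finset.card_insert_of_notMem hzv, hv]
    have hcol : A.witnessColour g d₀ (insert z v) = A.witnessColour g d₀ (insert a u) :=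
      hhom _ _ (by simpa [Set.insert_subset_iff] using ⟨hzH, hvH⟩)
        (by simpa [Set.insert_subset_iff] using ⟨haH, huH⟩) (by rw [hzcard, hcard])
    rw [← isWitness_insert_iff hzv, hzj]
    exact isWitness_of_witness_eq_some <| by
      rw [witness_eq_of_witnessColour_eq hcol (by omega), ht₀]
  exact hxy (g.injective ((key x (by simp)).symm.trans (key y (by simp))))

theorem pr_of_isRamsey (hR : IsRamsey κ) (hκ : ℵ₀ < κ) : Pr κ := by
  intro M A hM hA
  obtain ⟨g⟩ : Nonempty (κ.ord.ToType ≃ M) := Cardinal.eq.1 (by rw [mk_ord_toType, hM])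
  obtain ⟨d₀⟩ : Nonempty κ.ord.ToType :=
    mk_ne_zero_iff.1 (by rw [mk_ord_toType]; exact (aleph0_pos.trans hκ).ne')
  have hcolours : #(List (Option (A.language.Term ℕ))) < κ := by
    refine (mk_list_le_max _).trans_lt (max_lt hκ ?_)
    rw [mk_option]
    exact add_lt_of_lt hκ.le (A.mk_term_lt hκ hA) (one_lt_aleph0.trans hκ)
  obtain ⟨H, hH, hhom⟩ := hR.exists_isHomogeneous hκ.le hcolours (A.witnessColour g d₀)
  exact ⟨g '' H, A.isFree_image_of_isHomogeneous hκ.le g d₀ hH hhom,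
    by rw [mk_image_eq g.injective, hH]⟩

end Freeness

/-- If `κ` is Ramsey then `Pr κ` holds. -/
theorem stmt_14 (κ : Cardinal.{u}) (hκ : IsRamsey κ) : Pr κ := by
  rcases le_or_gt κ 1 with h1 | h1
  · exact pr_of_le_one h1
  · exact pr_of_isRamsey hκ (hκ.aleph0_lt h1)
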